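/- Let G be a finite simple connected graph and X ⊆ V(G) with κ_G(X) = 4 and κ_G(V(G)) = 3, and suppose that κ_{G/vy}(X) < 4 for every X-legal edge vy of G. If T is a separator of G with |T| = 3 and F is an X-free T-fragment of G, then |F| = 1. -/

import Mathlib

open SimpleGraph

variable {V : Type*} {W : Type*}

/-- `S` is an `X`-separator of `G`: at least two components of `G - S`
contain a vertex of `X`. -/
def SepSet (G : SimpleGraph V) (X S : Set V) : Prop :=
  ∃ (x y : V) (hx : x ∈ X ∧ x ∉ S) (hy : y ∈ X ∧ y ∉ S),
    ¬ (G.induce Sᶜ).Reachable ⟨x, hx.2⟩ ⟨y, hy.2⟩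

/-- `κ_G(X)`: the largest `k ≤ |X| - 1` such that every `X`-separator of `G`
has at least `k` vertices. -/
noncomputable def graphKappa (G : SimpleGraph V) (X : Set V) : ℕ :=
  sSup {k : ℕ | k ≤ X.ncard - 1 ∧ ∀ S : Set V, SepSet G X S → k ≤ S.ncard}

/-- `G/vy`: the graph obtained from `G` by contracting the edge `vy` into `v`,
i.e. `y` is removed (it becomes an isolated vertex of the ambient type) and an
edge `vz` is added for every `z` with `yz ∈ E(G)` and `vz ∉ E(G)`. -/
def contractEdge (G : SimpleGraph V) (v y : V) : SimpleGraph V where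
  Adj a b := a ≠ y ∧ b ≠ y ∧ a ≠ b ∧
    (G.Adj a b ∨ (a = v ∧ G.Adj y b) ∨ (b = v ∧ G.Adj a y))
  symm := by
    constructor
    rintro a b ⟨ha, hb, hab, h⟩
    refine ⟨hb, ha, hab.symm, ?_⟩
    rcases h with h | ⟨rfl, h⟩ | ⟨rfl, h⟩
    · exact Or.inl h.symm
    · exact Or.inr (Or.inr ⟨rfl, h.symm⟩)
    · exact Or.inr (Or.inl ⟨rfl, h.symm⟩)
  loopless := by constructor; rintro a ⟨_, _, h, _⟩; exact h rfl

/-- `F` is an `S`-fragment of `G`: a union of the vertex sets of at least one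
but not all components of `G - S`. -/
def IsFragment (G : SimpleGraph V) (S F : Set V) : Prop :=
  F.Nonempty ∧ Disjoint F S ∧ (Sᶜ \ F).Nonempty ∧
    ∀ a ∈ F, ∀ b, G.Adj a b → b ∉ S → b ∈ F

/-- `B` is an `S`-`X`-fragment of `G`: an `S`-fragment such that both `B` and
its complementary fragment `Sᶜ \ B` contain a vertex of `X`. -/
def IsXFragment (G : SimpleGraph V) (X S B : Set V) : Prop :=
  IsFragment G S B ∧ (B ∩ X).Nonempty ∧ ((Sᶜ \ B) ∩ X).Nonempty

/-!
Induction on `|F|`. Pick an edge `tc` with `t ∈ T`, `c ∈ F`. Since `c ∉ X`, contracting `tc`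
lowers `κ(X)`, which yields a minimum `X`-separator `U` of size four through `t` and `c`. Counting
how `U` and `T` cut each other, and using `κ(X) = 4` on the separators formed by pieces of `U`
and `T`, shows that `U` meets `T` and `F` only in `t` and `c` and each side of `U` meets `T`
in at most one vertex `s`. If `F` met a side of `U`, that part of `F` would be a smaller
`X`-free fragment of `{s, t, c}`, by induction a single vertex `ζ ∉ X` with all neighbours in
`{s, t, c}`. But contracting an edge `uζ`, with `u = s` if `ζ ∼ s`, gives a minimum
`X`-separator through `u` and `ζ`, and `ζ` then has a neighbour other than `u` on each of its
sides. These two non-adjacent neighbours would have to be `t` and `c`, which are adjacent.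
So `F ⊆ U ∩ F = {c}`.
-/

section Separators

variable {G : SimpleGraph V} {X S F : Set V}

lemma graphKappa_mem (G : SimpleGraph V) (Y : Set V) :
    graphKappa G Y ∈ {k : ℕ | k ≤ Y.ncard - 1 ∧ ∀ S : Set V, SepSet G Y S → k ≤ S.ncard} :=
  Nat.sSup_mem ⟨0, Nat.zero_le _, fun _ _ => Nat.zero_le _⟩ ⟨Y.ncard - 1, fun _ hk => hk.1⟩

lemma graphKappa_le_ncard_sub_one (G : SimpleGraph V) (Y : Set V) :
    graphKappa G Y ≤ Y.ncard - 1 :=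
  (graphKappa_mem G Y).1

lemma graphKappa_le_ncard {Y : Set V} (h : SepSet G Y S) : graphKappa G Y ≤ S.ncard :=
  (graphKappa_mem G Y).2 S h

lemma exists_sepSet_ncard_lt_of_graphKappa_lt {Y : Set V} {k : ℕ} (h : graphKappa G Y < k)
    (hk : k ≤ Y.ncard - 1) : ∃ S, SepSet G Y S ∧ S.ncard < k := by
  by_contra! hS
  exact h.not_ge (le_csSup ⟨Y.ncard - 1, fun _ hk => hk.1⟩ ⟨hk, hS⟩)

lemma IsXFragment.sepSet (h : IsXFragment G X S F) : SepSet G X S := by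
  obtain ⟨⟨-, hFS, -, hcl⟩, ⟨p, hpF, hpX⟩, ⟨q, ⟨hqS, hqF⟩, hqX⟩⟩ := h
  refine ⟨p, q, ⟨hpX, hFS.notMem_of_mem_left hpF⟩, ⟨hqX, hqS⟩, ?_⟩
  rintro ⟨w⟩
  obtain ⟨d, -, hd₁, hd₂⟩ := w.exists_boundary_dart {u | u.1 ∈ F} hpF hqF
  exact hd₂ (hcl _ hd₁ _ d.adj d.snd.2)

lemma SepSet.exists_isXFragment (h : SepSet G X S) : ∃ F, IsXFragment G X S F := by
  obtain ⟨x, y, hx, hy, hxy⟩ := h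
  let F := {a | ∃ ha : a ∉ S, (G.induce Sᶜ).Reachable ⟨x, hx.2⟩ ⟨a, ha⟩}
  have hxF : x ∈ F := ⟨hx.2, .refl _⟩
  have hyF : y ∈ Sᶜ \ F := ⟨hy.2, fun ⟨_, h⟩ => hxy h⟩
  refine ⟨F, ⟨⟨x, hxF⟩, Set.disjoint_left.2 fun _ ⟨ha, _⟩ => ha, ⟨y, hyF⟩, ?_⟩,
    ⟨x, hxF, hx.1⟩, ⟨y, hyF, hy.1⟩⟩
  rintro a ⟨ha, hr⟩ b hab hb
  exact ⟨hb, hr.trans (Adj.reachable (G := G.induce Sᶜ) (u := ⟨a, ha⟩) (v := ⟨b, hb⟩) hab)⟩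

lemma IsFragment.compl (h : IsFragment G S F) : IsFragment G S (Sᶜ \ F) := by
  obtain ⟨⟨a, ha⟩, hFS, hne, hcl⟩ := h
  refine ⟨hne, Set.disjoint_left.2 fun _ h => h.1,
    ⟨a, hFS.notMem_of_mem_left ha, fun h => h.2 ha⟩, ?_⟩
  rintro a ⟨haS, haF⟩ b hab hbS
  exact ⟨hbS, fun hbF => haF (hcl b hbF a hab.symm haS)⟩

lemma IsXFragment.compl (h : IsXFragment G X S F) : IsXFragment G X S (Sᶜ \ F) := by
  obtain ⟨hF, ⟨p, hpF, hpX⟩, hne⟩ := h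
  exact ⟨hF.compl, hne, ⟨p, ⟨hF.2.1.notMem_of_mem_left hpF, fun h => h.2 hpF⟩, hpX⟩⟩

lemma IsFragment.inter {S' Q R : Set V} (hQ : IsFragment G S Q) (hR : IsFragment G S' R)
    (hne : (Q ∩ R).Nonempty) : IsFragment G ((S ∩ R) ∪ (S ∩ S') ∪ (Q ∩ S')) (Q ∩ R) := by
  obtain ⟨-, hQS, -, hQcl⟩ := hQ
  obtain ⟨-, hRS, ⟨q, hqS, hqR⟩, hRcl⟩ := hR
  refine ⟨hne, Set.disjoint_left.2 ?_, ⟨q, ?_, fun h => hqR h.2⟩, ?_⟩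
  · rintro a ⟨haQ, haR⟩ ((h | h) | h)
    exacts [hQS.notMem_of_mem_left haQ h.1, hQS.notMem_of_mem_left haQ h.1,
      hRS.notMem_of_mem_left haR h.2]
  · rintro ((h | h) | h)
    exacts [hqR h.2, hqS h.2, hqS h.2]
  · rintro a ⟨haQ, haR⟩ b hab hb
    have hbQ := hQcl a haQ b hab
    have hbR := hRcl a haR b hab
    simp only [Set.mem_union, Set.mem_inter_iff] at hb
    tauto

lemma IsFragment.exists_adj (hconn : G.Connected) (hF : IsFragment G S F) :
    ∃ t ∈ S, ∃ c ∈ F, G.Adj t c := by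
  obtain ⟨⟨a, ha⟩, -, ⟨b, -, hb⟩, hcl⟩ := hF
  obtain ⟨d, -, hd₁, hd₂⟩ := (hconn.preconnected a b).some.exists_boundary_dart F ha hb
  exact ⟨d.snd, by_contra fun h => hd₂ (hcl _ hd₁ _ d.adj h), d.fst, hd₁, d.adj.symm⟩

lemma IsFragment.neighborSet_subset {a : V} (h : IsFragment G S {a}) : G.neighborSet a ⊆ S :=
  fun b hab => by_contra fun hb => G.loopless.irrefl a (h.2.2.2 a rfl b hab hb ▸ hab)

lemma ncard_inter_add_ncard_inter_add_ncard_inter [Finite V] (Y : Set V) (h : Disjoint F S) :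
    (S ∩ Y).ncard + (F ∩ Y).ncard + ((Sᶜ \ F) ∩ Y).ncard = Y.ncard := by
  have hin : (Y \ S) ∩ F = F ∩ Y := by
    ext a
    have := h.notMem_of_mem_left (a := a)
    simp only [Set.mem_inter_iff, Set.mem_sdiff]
    tauto
  have hout : (Y \ S) \ F = (Sᶜ \ F) ∩ Y := by
    ext a
    simp only [Set.mem_inter_iff, Set.mem_sdiff, Set.mem_compl_iff]
    tauto
  rw [← Set.ncard_inter_add_ncard_sdiff_eq_ncard Y S,
    ← Set.ncard_inter_add_ncard_sdiff_eq_ncard (Y \ S) F, hin, hout, Set.inter_comm, add_assoc]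

end Separators

section Contraction

lemma SimpleGraph.Reachable.map_of_adj_or_eq {α β : Type*} {G : SimpleGraph α}
    {H : SimpleGraph β} (f : α → β) (hf : ∀ a b, G.Adj a b → H.Adj (f a) (f b) ∨ f a = f b)
    {u v : α} (h : G.Reachable u v) : H.Reachable (f u) (f v) := by
  rw [reachable_iff_reflTransGen] at h ⊢
  refine h.lift' f fun a b hab => ?_
  rcases hf a b hab with h | h
  · exact .single h
  · exact show Relation.ReflTransGen H.Adj (f a) (f b) from h ▸ .refl

variable {G : SimpleGraph V} {X S : Set V} {v y : V}

lemma contractEdge_adj_or_eq [DecidableEq V] (hvy : v ≠ y) {a b : V} (hab : G.Adj a b) :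
    (contractEdge G v y).Adj (Function.update id y v a) (Function.update id y v b) ∨
      Function.update id y v a = Function.update id y v b := by
  by_cases ha : a = y <;> by_cases hb : b = y
  · exact absurd (ha.trans hb.symm) hab.ne
  · subst ha
    simp only [Function.update_self, Function.update_of_ne hb, id]
    by_cases hbv : b = v
    · exact .inr hbv.symm
    · exact .inl ⟨hvy, hb, Ne.symm hbv, .inr (.inl ⟨rfl, hab⟩)⟩
  · subst hb
    simp only [Function.update_self, Function.update_of_ne ha, id]
    by_cases hav : a = v
    · exact .inr hav
    · exact .inl ⟨ha, hvy, hav, .inr (.inr ⟨rfl, hab⟩)⟩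
  · simp only [Function.update_of_ne ha, Function.update_of_ne hb, id]
    exact .inl ⟨ha, hb, hab.ne, .inl hab⟩

lemma SepSet.of_contractEdge (hS : SepSet (contractEdge G v y) X S) (hvy : v ≠ y)
    (hy : y ∉ X) (hv : v ∉ S) : SepSet G X S := by
  classical
  obtain ⟨a, b, ha, hb, hab⟩ := hS
  refine ⟨a, b, ha, hb, fun h => hab ?_⟩
  have hfS : ∀ c ∉ S, Function.update id y v c ∉ S := fun c hc => by
    by_cases hcy : c = y
    · rwa [hcy, Function.update_self]
    · rwa [Function.update_of_ne hcy]
  have hfX : ∀ c ∈ X, Function.update id y v c = c := fun c hc =>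
    Function.update_of_ne (fun h : c = y => hy (h ▸ hc)) _ _
  have := h.map_of_adj_or_eq (H := (contractEdge G v y).induce Sᶜ)
    (fun c : ↥Sᶜ => ⟨Function.update id y v c, hfS c c.2⟩) fun c d hcd =>
      (contractEdge_adj_or_eq hvy hcd).imp id Subtype.ext
  simpa only [hfX a ha.1, hfX b hb.1] using this

lemma SepSet.insert_of_contractEdge (hS : SepSet (contractEdge G v y) X S) (hy : y ∉ X) :
    SepSet G X (insert y S) := by
  obtain ⟨a, b, ha, hb, hab⟩ := hS
  have hnot : ∀ c ∈ X, c ∉ S → c ∉ insert y S := fun c hcX hcS h =>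
    h.elim (fun h => hy (h ▸ hcX)) hcS
  refine ⟨a, b, ⟨ha.1, hnot a ha.1 ha.2⟩, ⟨hb.1, hnot b hb.1 hb.2⟩, fun h => hab ?_⟩
  refine h.map_of_adj_or_eq (H := (contractEdge G v y).induce Sᶜ)
    (fun c => ⟨c.1, fun h => c.2 (Set.mem_insert_of_mem _ h)⟩) fun c d hcd => .inl ?_
  have hcd : G.Adj c.1 d.1 := hcd
  exact ⟨fun h => c.2 (.inl h), fun h => d.2 (.inl h), hcd.ne, .inl hcd⟩

lemma exists_sepSet_of_contractEdge {k : ℕ} (hmin : ∀ S, SepSet G X S → k ≤ S.ncard)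
    (hk : k ≤ X.ncard - 1) (hlt : graphKappa (contractEdge G v y) X < k) (hvy : v ≠ y)
    (hy : y ∉ X) : ∃ U, SepSet G X U ∧ U.ncard = k ∧ v ∈ U ∧ y ∈ U := by
  obtain ⟨S, hS, hSk⟩ := exists_sepSet_ncard_lt_of_graphKappa_lt hlt hk
  have hvS : v ∈ S := by_contra fun hv => (hmin S (hS.of_contractEdge hvy hy hv)).not_gt hSk
  have hU := hS.insert_of_contractEdge hy
  refine ⟨insert y S, hU, le_antisymm ?_ (hmin _ hU), Set.mem_insert_of_mem _ hvS,
    Set.mem_insert _ _⟩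
  exact (Set.ncard_insert_le y S).trans hSk

end Contraction

section MinimumSeparators

variable [Finite V] {G : SimpleGraph V} {X U Z : Set V}

lemma IsXFragment.exists_adj_of_minimal (hmin : ∀ S, SepSet G X S → U.ncard ≤ S.ncard)
    (hZ : IsXFragment G X U Z) {w : V} (hw : w ∈ U) : ∃ z ∈ Z, G.Adj w z := by
  by_contra! h
  obtain ⟨⟨hne, hZU, hout, hcl⟩, hZX, hoX⟩ := hZ
  have hsub : Uᶜ \ Z ⊆ (U \ {w})ᶜ \ Z := fun a ha => ⟨fun h => ha.1 h.1, ha.2⟩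
  have hZ' : IsXFragment G X (U \ {w}) Z := by
    refine ⟨⟨hne, hZU.mono_right Set.sdiff_subset, hout.mono hsub, ?_⟩, hZX,
      hoX.mono (Set.inter_subset_inter_left _ hsub)⟩
    intro a ha b hab hb
    by_cases hbw : b = w
    · exact absurd (hbw ▸ hab.symm) (h a ha)
    · exact hcl a ha b hab fun hbU => hb ⟨hbU, hbw⟩
  have hle := hmin _ hZ'.sepSet
  rw [Set.ncard_sdiff_singleton_of_mem hw] at hle
  have hpos := (Set.ncard_pos (s := U)).2 ⟨w, hw⟩
  omega

lemma exists_adj_adj_not_adj_of_contractEdge {k : ℕ} (hmin : ∀ S, SepSet G X S → k ≤ S.ncard)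
    (hk : k ≤ X.ncard - 1) {v y : V} (hlt : graphKappa (contractEdge G v y) X < k)
    (hvy : v ≠ y) (hy : y ∉ X) :
    ∃ a b, G.Adj y a ∧ G.Adj y b ∧ a ≠ v ∧ b ≠ v ∧ a ≠ b ∧ ¬ G.Adj a b := by
  obtain ⟨U, hU, hUk, hvU, hyU⟩ := exists_sepSet_of_contractEdge hmin hk hlt hvy hy
  obtain ⟨Z, hZ⟩ := hU.exists_isXFragment
  have hUmin : ∀ S, SepSet G X S → U.ncard ≤ S.ncard := hUk ▸ hmin
  obtain ⟨a, ha, hya⟩ := hZ.exists_adj_of_minimal hUmin hyU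
  obtain ⟨b, ⟨hbU, hbZ⟩, hyb⟩ := hZ.compl.exists_adj_of_minimal hUmin hyU
  refine ⟨a, b, hya, hyb, ?_, ?_, ?_, fun hab => hbZ (hZ.1.2.2.2 a ha b hab hbU)⟩
  · rintro rfl
    exact hZ.1.2.1.notMem_of_mem_left ha hvU
  · rintro rfl
    exact hbU hvU
  · rintro rfl
    exact hbZ ha

lemma not_neighborSet_subset_union_pair {k : ℕ} (hmin : ∀ S, SepSet G X S → k ≤ S.ncard)
    (hk : k ≤ X.ncard - 1)
    (hcontr : ∀ v y : V, G.Adj v y → y ∉ X → graphKappa (contractEdge G v y) X < k)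
    {P : Set V} {y v t c : V} (hy : y ∉ X) (hvy : G.Adj v y) (hP : P.Subsingleton)
    (htc : G.Adj t c) : ¬ G.neighborSet y ⊆ P ∪ {t, c} := by
  intro hN
  -- contract an edge from `y` into `P` if there is one; the two neighbours of `y` it
  -- provides then avoid `P`
  obtain ⟨u, huy, hPu⟩ : ∃ u, G.Adj u y ∧ ∀ a ∈ P, G.Adj y a → a = u := by
    by_cases h : ∃ s ∈ P, G.Adj s y
    · obtain ⟨s, hs, hsy⟩ := h
      exact ⟨s, hsy, fun a ha _ => hP ha hs⟩
    · push Not at h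
      exact ⟨v, hvy, fun a ha hya => absurd hya.symm (h a ha)⟩
  obtain ⟨a, b, hya, hyb, hau, hbu, hab, hnab⟩ :=
    exists_adj_adj_not_adj_of_contractEdge hmin hk (hcontr u y huy hy) huy.ne hy
  have ha : a = t ∨ a = c := (hN hya).resolve_left fun h => hau (hPu a h hya)
  have hb : b = t ∨ b = c := (hN hyb).resolve_left fun h => hbu (hPu b h hyb)
  rcases ha with rfl | rfl <;> rcases hb with rfl | rfl
  exacts [hab rfl, hnab htc, hnab htc.symm, hab rfl]

end MinimumSeparators

section ThreeSeparators

variable {G : SimpleGraph V} {X T F U Z : Set V}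

lemma IsXFragment.four_le_of_inter_compl (hmin : ∀ S, SepSet G X S → 4 ≤ S.ncard)
    (hF : IsFragment G T F) (hZ : IsXFragment G X U Z) (hx : (Z ∩ (Tᶜ \ F) ∩ X).Nonempty) :
    4 ≤ ((Tᶜ \ F) ∩ U).ncard + (T ∩ U).ncard + (Z ∩ T).ncard := by
  obtain ⟨x, hxZ, hxX⟩ := hx
  obtain ⟨q, ⟨hqU, hqZ⟩, hqX⟩ := hZ.2.2
  have hsep : SepSet G X ((U ∩ (Tᶜ \ F)) ∪ (U ∩ T) ∪ (Z ∩ T)) :=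
    IsXFragment.sepSet ⟨hZ.1.inter hF.compl ⟨x, hxZ⟩, ⟨x, hxZ, hxX⟩,
      ⟨q, ⟨by rintro ((h | h) | h) <;> simp_all, fun h => hqZ h.1⟩, hqX⟩⟩
  calc 4 ≤ _ := hmin _ hsep
    _ ≤ _ := (Set.ncard_union_le _ _).trans (Nat.add_le_add_right (Set.ncard_union_le _ _) _)
    _ = _ := by rw [Set.inter_comm U, Set.inter_comm U]

lemma crossing_ncard_le [Finite V] (hmin : ∀ S, SepSet G X S → 4 ≤ S.ncard)
    (hX : 4 ≤ X.ncard - 1) (hU : U.ncard ≤ 4) (hT : T.ncard ≤ 3) (hF : IsFragment G T F)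
    (hfree : Disjoint F X) (hZ : IsXFragment G X U Z) (hTU : (T ∩ U).Nonempty)
    (hFU : (F ∩ U).Nonempty) :
    (T ∩ U).ncard ≤ 1 ∧ (F ∩ U).ncard ≤ 1 ∧ (Z ∩ T).ncard ≤ 1 := by
  have hmeet : ∀ Z', IsXFragment G X U Z' → ¬ (Z' ∩ (Tᶜ \ F) ∩ X).Nonempty →
      1 ≤ (Z' ∩ T).ncard := by
    intro Z' hZ' hno
    obtain ⟨x, hxZ, hxX⟩ := hZ'.2.1
    have hxT : x ∈ T := by_contra fun hxT =>
      hno ⟨x, ⟨hxZ, hxT, hfree.notMem_of_mem_right hxX⟩, hxX⟩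
    exact (Set.ncard_pos).2 ⟨x, hxZ, hxT⟩
  have hT' := ncard_inter_add_ncard_inter_add_ncard_inter T hZ.1.2.1
  have hU' := ncard_inter_add_ncard_inter_add_ncard_inter U hF.2.1
  have hTU₁ := (Set.ncard_pos).2 hTU
  have hFU₁ := (Set.ncard_pos).2 hFU
  rw [Set.inter_comm U T] at hT'
  by_cases hA : (Z ∩ (Tᶜ \ F) ∩ X).Nonempty <;> by_cases hB : ((Uᶜ \ Z) ∩ (Tᶜ \ F) ∩ X).Nonempty
  · have := hZ.four_le_of_inter_compl hmin hF hA
    have := hZ.compl.four_le_of_inter_compl hmin hF hB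
    omega
  · have := hZ.four_le_of_inter_compl hmin hF hA
    have := hmeet _ hZ.compl hB
    omega
  · have := hmeet _ hZ hA
    have := hZ.compl.four_le_of_inter_compl hmin hF hB
    omega
  · have := hmeet _ hZ hA
    have := hmeet _ hZ.compl hB
    have hXU : (Tᶜ \ F) ∩ X ⊆ (Tᶜ \ F) ∩ U := fun x ⟨hxF', hxX⟩ => ⟨hxF', by_contra fun hxU =>
      (em (x ∈ Z)).elim (fun hxZ => hA ⟨x, ⟨hxZ, hxF'⟩, hxX⟩)
        fun hxZ => hB ⟨x, ⟨⟨hxU, hxZ⟩, hxF'⟩, hxX⟩⟩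
    have hX' := ncard_inter_add_ncard_inter_add_ncard_inter X hF.2.1
    rw [Set.disjoint_iff_inter_eq_empty.1 hfree, Set.ncard_empty] at hX'
    have := Set.ncard_le_ncard hXU
    have := Set.ncard_le_ncard (Set.inter_subset_left (s := T) (t := X))
    omega

lemma IsFragment.inter_eq_empty [Finite V] (hconn : G.Connected)
    (hmin : ∀ S, SepSet G X S → 4 ≤ S.ncard) (hX : 4 ≤ X.ncard - 1)
    (hcontr : ∀ v y : V, G.Adj v y → y ∉ X → graphKappa (contractEdge G v y) X < 4)
    (hT : T.ncard ≤ 3) (hF : IsFragment G T F) (hfree : Disjoint F X)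
    (ih : ∀ T' F' : Set V, T'.ncard ≤ 3 → IsFragment G T' F' → Disjoint F' X →
      F'.ncard < F.ncard → F'.ncard = 1)
    (hU : U.ncard ≤ 4) (hZ : IsXFragment G X U Z) {t c : V} (htc : G.Adj t c)
    (ht : t ∈ T ∩ U) (hc : c ∈ F ∩ U) : F ∩ Z = ∅ := by
  by_contra hne
  obtain ⟨hTU, hFU, hZT⟩ := crossing_ncard_le hmin hX hU hT hF hfree hZ ⟨t, ht⟩ ⟨c, hc⟩
  rw [Set.inter_comm] at hZT
  have hfrag := hF.inter hZ.1 (Set.nonempty_iff_ne_empty.2 hne)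
  have hlt : (F ∩ Z).ncard < F.ncard := Set.ncard_lt_ncard
    ⟨Set.inter_subset_left, fun h => hZ.1.2.1.notMem_of_mem_left (h hc.1).2 hc.2⟩
  have hsep : ((T ∩ Z) ∪ (T ∩ U) ∪ (F ∩ U)).ncard ≤ 3 := by
    have := (Set.ncard_union_le _ _).trans
      (Nat.add_le_add_right (Set.ncard_union_le (T ∩ Z) (T ∩ U)) (F ∩ U).ncard)
    omega
  obtain ⟨ζ, hζ⟩ :=
    Set.ncard_eq_one.1 (ih _ _ hsep hfrag (hfree.mono_left Set.inter_subset_left) hlt)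
  have hζX : ζ ∉ X := hfree.notMem_of_mem_left (hζ.symm.subset rfl).1
  rw [hζ] at hfrag
  obtain ⟨s, -, _, hζ', hsζ⟩ := hfrag.exists_adj hconn
  rw [Set.mem_singleton_iff.1 hζ'] at hsζ
  have hN : G.neighborSet ζ ⊆ (T ∩ Z) ∪ ({t} ∪ {c}) := by
    rw [← Set.union_assoc]
    refine hfrag.neighborSet_subset.trans (Set.union_subset_union
      (Set.union_subset_union_right _ fun a ha => (Set.ncard_le_one_iff).1 hTU ha ht)
      fun a ha => (Set.ncard_le_one_iff).1 hFU ha hc)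
  exact not_neighborSet_subset_union_pair hmin hX hcontr hζX hsζ
    ((Set.ncard_le_one_iff_subsingleton).1 hZT) htc hN

theorem IsFragment.ncard_eq_one [Finite V] (hconn : G.Connected)
    (hmin : ∀ S, SepSet G X S → 4 ≤ S.ncard) (hX : 4 ≤ X.ncard - 1)
    (hcontr : ∀ v y : V, G.Adj v y → y ∉ X → graphKappa (contractEdge G v y) X < 4)
    (hT : T.ncard ≤ 3) (hF : IsFragment G T F) (hfree : Disjoint F X) : F.ncard = 1 := by
  induction hn : F.ncard using Nat.strong_induction_on generalizing T F with
  | _ n ih =>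
  obtain ⟨t, ht, c, hc, htc⟩ := hF.exists_adj hconn
  have hcX : c ∉ X := hfree.notMem_of_mem_left hc
  obtain ⟨U, hU, hU4, htU, hcU⟩ :=
    exists_sepSet_of_contractEdge hmin hX (hcontr t c htc hcX) htc.ne hcX
  obtain ⟨Z, hZ⟩ := hU.exists_isXFragment
  have hside : ∀ Z', IsXFragment G X U Z' → F ∩ Z' = ∅ := fun Z' hZ' =>
    hF.inter_eq_empty hconn hmin hX hcontr hT hfree
      (fun T' F' hT' hF' hfree' hlt => ih _ (hn ▸ hlt) hT' hF' hfree' rfl) hU4.le hZ' htc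
      ⟨ht, htU⟩ ⟨hc, hcU⟩
  have hFU : F ⊆ F ∩ U := fun a ha => ⟨ha, by_contra fun haU => (em (a ∈ Z)).elim
    (fun haZ => (hside Z hZ).subset ⟨ha, haZ⟩) fun haZ => (hside _ hZ.compl).subset ⟨ha, haU, haZ⟩⟩
  have := (crossing_ncard_le hmin hX hU4.le hT hF hfree hZ ⟨t, ht, htU⟩ ⟨c, hc, hcU⟩).2.1
  have := Set.ncard_le_ncard hFU
  have := (Set.ncard_pos).2 hF.1
  omega

end ThreeSeparators

theorem xfree_fragment_singleton_general {V : Type*} [Fintype V] (G : SimpleGraph V)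
    (hconn : G.Connected) (X : Set V)
    (hX : graphKappa G X = 4)
    (hcontr : ∀ v y : V, G.Adj v y → y ∉ X →
      graphKappa (contractEdge G v y) X < 4)
    (T : Set V) (hT3 : T.ncard = 3)
    (F : Set V) (hF : IsFragment G T F) (hfree : Disjoint F X) :
    F.ncard = 1 :=
  hF.ncard_eq_one hconn (fun _ hS => hX ▸ graphKappa_le_ncard hS)
    (hX ▸ graphKappa_le_ncard_sub_one G X) hcontr hT3.le hfree

/-- Claim: let `G` be a finite simple connected graph and `X ⊆ V(G)` with
`κ_G(X) = 4` and `κ_G(V(G)) = 3`, such that `κ_{G/vy}(X) < 4` for every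
`X`-legal edge `vy` of `G`.  If `T` is a separator of `G` with `|T| = 3` and
`F` is an `X`-free `T`-fragment of `G`, then `|F| = 1`. -/
theorem xfree_fragment_singleton {V : Type*} [Fintype V] (G : SimpleGraph V)
    (hconn : G.Connected) (X : Set V)
    (hX : graphKappa G X = 4) (hV : graphKappa G Set.univ = 3)
    (hcontr : ∀ v y : V, G.Adj v y → y ∉ X →
      graphKappa (contractEdge G v y) X < 4)
    (T : Set V) (hT : SepSet G Set.univ T) (hT3 : T.ncard = 3)
    (F : Set V) (hF : IsFragment G T F) (hfree : Disjoint F X) :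
    F.ncard = 1 :=
  xfree_fragment_singleton_general G hconn X hX hcontr T hT3 F hF hfree
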